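/- arXiv:1311.3193 — 8 statements merged into one kernel-verified Lean document; each statement's English description precedes it below -/
import Mathlib

section
/- For any bounded set S of diameter d > 0 in a metric space and any positive integer k, the k-fold Borsuk number satisfies a_k(S) ≥ 2k. -/
open Set

/-- The `k`-fold Borsuk number of a set `S` in a metric space: the smallest
cardinality of a finite family of subsets of `S`, each of diameter strictly
less than `diam S`, covering every point of `S` at least `k` times
(`⊤` if no such finite family exists). -/
noncomputable def borsukNum {X : Type*} [MetricSpace X] (S : Set X) (k : ℕ) : ℕ∞ :=
  sInf {n : ℕ∞ | ∃ m : ℕ, n = (m : ℕ∞) ∧ ∃ F : Fin m → Set X,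
    (∀ i, F i ⊆ S ∧ Metric.diam (F i) < Metric.diam S) ∧
    ∀ x ∈ S, k ≤ {i : Fin m | x ∈ F i}.ncard}

/-! A set of diameter `d` cannot be split into finitely many pieces of diameter `< d` without
separating some pair of points: the largest piece still has diameter `c < d`, and two points of
`S` at distance `> c` never lie in a common piece. Each of these two points is covered `k` times
by pairwise different pieces, so there are at least `2k` pieces. -/

theorem Finite.exists_le_lt_forall_le {ι α : Type*} [Finite ι] [LinearOrder α] {f : ι → α}
    {a b : α} (hba : b < a) (hf : ∀ i, f i < a) : ∃ c, b ≤ c ∧ c < a ∧ ∀ i, f i ≤ c := by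
  rcases isEmpty_or_nonempty ι with hι | hι
  · exact ⟨b, le_rfl, hba, isEmptyElim⟩
  · obtain ⟨j, hj⟩ := Finite.exists_max f
    exact ⟨max b (f j), le_max_left _ _, max_lt hba (hf j), fun i => (hj i).trans (le_max_right _ _)⟩

namespace Metric

variable {X : Type*} [PseudoMetricSpace X] {S : Set X}

theorem isBounded_of_diam_pos (hS : 0 < diam S) : Bornology.IsBounded S := by
  by_contra h
  exact hS.ne' (diam_eq_zero_of_unbounded h)

theorem exists_lt_dist_of_lt_diam {c : ℝ} (hc₀ : 0 ≤ c) (hc : c < diam S) :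
    ∃ x ∈ S, ∃ y ∈ S, c < dist x y := by
  by_contra! h
  exact (diam_le_of_forall_dist_le hc₀ h).not_gt hc

theorem exists_separated_pair_of_diam_lt {ι : Type*} [Finite ι] {F : ι → Set X}
    (hS : 0 < diam S) (hFS : ∀ i, F i ⊆ S) (hF : ∀ i, diam (F i) < diam S) :
    ∃ x ∈ S, ∃ y ∈ S, ∀ i, x ∈ F i → y ∉ F i := by
  obtain ⟨c, hc₀, hcS, hFc⟩ := Finite.exists_le_lt_forall_le hS hF
  obtain ⟨x, hx, y, hy, hxy⟩ := exists_lt_dist_of_lt_diam hc₀ hcS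
  refine ⟨x, hx, y, hy, fun i hxi hyi => hxy.not_ge ?_⟩
  calc dist x y ≤ diam (F i) :=
        dist_le_diam_of_mem ((isBounded_of_diam_pos hS).subset (hFS i)) hxi hyi
    _ ≤ c := hFc i

end Metric

theorem borsuk_ge_two_k_general {X : Type*} [MetricSpace X] (S : Set X)
    (hd : 0 < Metric.diam S)
    (k : ℕ) :
    (2 * k : ℕ∞) ≤ borsukNum S k := by
  refine le_sInf ?_
  rintro _ ⟨m, rfl, F, hF, hcov⟩
  obtain ⟨x, hx, y, hy, hsep⟩ :=
    Metric.exists_separated_pair_of_diam_lt hd (fun i => (hF i).1) (fun i => (hF i).2)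
  have hdisj : Disjoint {i | x ∈ F i} {i | y ∈ F i} :=
    disjoint_left.2 hsep
  have hm : {i | x ∈ F i}.ncard + {i | y ∈ F i}.ncard ≤ m := by
    rw [← ncard_union_eq hdisj]
    simpa using ncard_le_card ({i | x ∈ F i} ∪ {i | y ∈ F i})
  have : 2 * k ≤ m := by linarith [hcov x hx, hcov y hy]
  exact_mod_cast this

theorem borsuk_ge_two_k {X : Type*} [MetricSpace X] (S : Set X)
    (hb : Bornology.IsBounded S) (hd : 0 < Metric.diam S)
    (k : ℕ) (hk : 0 < k) :
    (2 * k : ℕ∞) ≤ borsukNum S k :=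
  borsuk_ge_two_k_general S hd k
end

section
/- Let S be a bounded set of diameter d > 0 in a metric space. If the (1-fold) Borsuk number a(S) equals 2, then a_k(S) = 2k for every positive integer k. -/
open Set

/-!
Repeating a cover of `S` by two sets of smaller diameter `k` times gives a `k`-fold cover by
`2k` sets. Conversely, the finitely many members of any admissible family have diameters bounded
by some `c < diam S`, so some pair of points of `S` at distance `> c` lies in no common member;
each of the two points lies in `k` members, which gives at least `2k` members.
-/

open Metric

section Cover

variable {X ι : Type*} [PseudoMetricSpace X] {S : Set X} {k : ℕ}

/-- The families admitted in `borsukNum`, over an arbitrary index type. -/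
def IsBorsukCover (S : Set X) (k : ℕ) (F : ι → Set X) : Prop :=
  (∀ i, F i ⊆ S ∧ diam (F i) < diam S) ∧ ∀ x ∈ S, k ≤ {i | x ∈ F i}.ncard

theorem IsBorsukCover.comp_equiv {κ : Type*} {F : ι → Set X} (hF : IsBorsukCover S k F)
    (e : κ ≃ ι) : IsBorsukCover S k (F ∘ e) := by
  refine ⟨fun i => hF.1 (e i), fun x hx => ?_⟩
  have hpre : {i | x ∈ (F ∘ e) i} = e ⁻¹' {i | x ∈ F i} := rfl
  rw [hpre, ncard_preimage_of_injective_subset_range e.injective (by simp)]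
  exact hF.2 x hx

theorem IsBorsukCover.replicate {F : ι → Set X} (hF : IsBorsukCover S k F) (l : ℕ) :
    IsBorsukCover S (k * l) fun p : ι × Fin l => F p.1 := by
  refine ⟨fun p => hF.1 p.1, fun x hx => ?_⟩
  have hprod : {p : ι × Fin l | x ∈ F p.1} = {i | x ∈ F i} ×ˢ univ := by ext; simp
  rw [hprod, ncard_prod, ncard_univ, Nat.card_fin]
  exact Nat.mul_le_mul_right l (hF.2 x hx)

theorem exists_pair_forall_notMem_of_diam_lt [Finite ι] (hd : 0 < diam S) {F : ι → Set X}
    (hFS : ∀ i, F i ⊆ S) (hF : ∀ i, diam (F i) < diam S) :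
    ∃ x ∈ S, ∃ y ∈ S, ∀ i, x ∈ F i → y ∉ F i := by
  have hS : Bornology.IsBounded S := by
    by_contra h
    exact hd.ne' (diam_eq_zero_of_unbounded h)
  have hSne : S.Nonempty := nonempty_iff_ne_empty.2 (by rintro rfl; simp at hd)
  obtain ⟨c, hcS, hFc⟩ : ∃ c < diam S, ∀ i, diam (F i) ≤ c := by
    cases isEmpty_or_nonempty ι
    · exact ⟨0, hd, isEmptyElim⟩
    · obtain ⟨i₀, hi₀⟩ := Finite.exists_max fun i => diam (F i)
      exact ⟨_, hF i₀, hi₀⟩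
  by_contra! h
  refine hcS.not_ge (diam_le_of_forall_dist_le_of_nonempty hSne fun x hx y hy => ?_)
  obtain ⟨i, hxi, hyi⟩ := h x hx y hy
  exact (dist_le_diam_of_mem (hS.subset (hFS i)) hxi hyi).trans (hFc i)

theorem IsBorsukCover.two_mul_le_natCard [Finite ι] (hd : 0 < diam S) {F : ι → Set X}
    (hF : IsBorsukCover S k F) : 2 * k ≤ Nat.card ι := by
  obtain ⟨x, hx, y, hy, hxy⟩ :=
    exists_pair_forall_notMem_of_diam_lt hd (fun i => (hF.1 i).1) fun i => (hF.1 i).2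
  have hdisj : Disjoint {i | x ∈ F i} {i | y ∈ F i} := disjoint_left.2 hxy
  calc 2 * k ≤ {i | x ∈ F i}.ncard + {i | y ∈ F i}.ncard := by
        have := hF.2 x hx
        have := hF.2 y hy
        omega
    _ = ({i | x ∈ F i} ∪ {i | y ∈ F i}).ncard := (ncard_union_eq hdisj).symm
    _ ≤ Nat.card ι := ncard_le_card _

end Cover

section BorsukNum

variable {X : Type*} [MetricSpace X] {S : Set X} {k : ℕ}

theorem borsukNum_le_natCard {ι : Type*} [Finite ι] {F : ι → Set X}
    (hF : IsBorsukCover S k F) : borsukNum S k ≤ Nat.card ι :=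
  sInf_le ⟨Nat.card ι, rfl, F ∘ (Finite.equivFin ι).symm, hF.comp_equiv _⟩

theorem le_borsukNum {n : ℕ∞}
    (h : ∀ m (F : Fin m → Set X), IsBorsukCover S k F → n ≤ m) : n ≤ borsukNum S k :=
  le_sInf <| by
    rintro _ ⟨m, rfl, F, hF⟩
    exact h m F hF

theorem exists_isBorsukCover_of_borsukNum_eq {n : ℕ} (h : borsukNum S k = n) :
    ∃ F : Fin n → Set X, IsBorsukCover S k F := by
  have hmem : borsukNum S k ∈
      {n : ℕ∞ | ∃ m : ℕ, n = m ∧ ∃ F : Fin m → Set X, IsBorsukCover S k F} :=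
    csInf_mem <| nonempty_iff_ne_empty.2 fun hempty => ENat.top_ne_natCast n <| by
      rw [← h]
      exact ((congrArg sInf hempty).trans sInf_empty).symm
  obtain ⟨m, hm, F, hF⟩ := hmem
  obtain rfl : m = n := by exact_mod_cast hm.symm.trans h
  exact ⟨F, hF⟩

theorem borsukNum_mul_le {n : ℕ} (h : borsukNum S k = n) (l : ℕ) :
    borsukNum S (k * l) ≤ n * l := by
  obtain ⟨F, hF⟩ := exists_isBorsukCover_of_borsukNum_eq h
  simpa using borsukNum_le_natCard (hF.replicate l)

theorem two_mul_le_borsukNum (hd : 0 < diam S) (k : ℕ) : (2 * k : ℕ∞) ≤ borsukNum S k :=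
  le_borsukNum fun m _ hF => by
    exact_mod_cast (by simpa using hF.two_mul_le_natCard hd : 2 * k ≤ m)

end BorsukNum

theorem borsuk_eq_two_k_of_eq_two_general {X : Type*} [MetricSpace X] (S : Set X)
    (ha : borsukNum S 1 = 2)
    (k : ℕ) :
    borsukNum S k = (2 * k : ℕ∞) := by
  obtain ⟨F, hF⟩ := exists_isBorsukCover_of_borsukNum_eq (n := 2) ha
  have hd : 0 < diam S := diam_nonneg.trans_lt (hF.1 0).2
  refine le_antisymm ?_ (two_mul_le_borsukNum hd k)
  simpa using borsukNum_mul_le (n := 2) ha k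

theorem borsuk_eq_two_k_of_eq_two {X : Type*} [MetricSpace X] (S : Set X)
    (hb : Bornology.IsBounded S) (hd : 0 < Metric.diam S)
    (ha : borsukNum S 1 = 2)
    (k : ℕ) (hk : 0 < k) :
    borsukNum S k = (2 * k : ℕ∞) :=
  borsuk_eq_two_k_of_eq_two_general S ha k
end

section
/- Let S be a closed bounded set of positive diameter in a finite-dimensional real normed space. Then for every positive integer k, a_k(S) = a_k(∂S), where ∂S denotes the topological boundary (frontier) of S. -/
open Set

/-!
If `S` has empty interior then `∂S = S`. Otherwise fix an interior point `c`.
Every point of `S` lies on a segment `[c, z]` with `z ∈ ∂S` (follow the ray from `c` through it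
until it leaves `S`); applied with `c ∈ ∂S` this gives `S ⊆ conv ∂S`, hence `diam ∂S = diam S`.
So a family for `S` restricts to one for `∂S`, and a family for `∂S` is turned into one for `S` by
replacing each member `F` with the part of `S` in the cone `⋃ z ∈ F, [c, z]`. That cone has
diameter at most `max (sup_{x ∈ S} dist x c) (diam F)`, and the first term is `< diam S`
because `c` is interior.
-/

open Metric

/-- A family witnessing `borsukNum S k ≤ m`. -/
def IsBorsukFamily {X : Type*} [MetricSpace X] (S : Set X) (k : ℕ) {m : ℕ}
    (F : Fin m → Set X) : Prop :=
  (∀ i, F i ⊆ S ∧ diam (F i) < diam S) ∧ ∀ x ∈ S, k ≤ {i : Fin m | x ∈ F i}.ncard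

section MetricSpace

variable {X : Type*} [MetricSpace X]

theorem borsukNum_le_of_forall_isBorsukFamily {S T : Set X} {k : ℕ}
    (h : ∀ m (F : Fin m → Set X), IsBorsukFamily T k F →
      ∃ G : Fin m → Set X, IsBorsukFamily S k G) :
    borsukNum S k ≤ borsukNum T k :=
  sInf_le_sInf fun _ ⟨m, hn, F, hF⟩ => ⟨m, hn, h m F hF⟩

theorem IsBorsukFamily.inter_of_diam_eq {S T : Set X} {k m : ℕ} {F : Fin m → Set X}
    (hF : IsBorsukFamily S k F) (hb : Bornology.IsBounded S) (hTS : T ⊆ S)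
    (hdiam : diam T = diam S) : IsBorsukFamily T k fun i => F i ∩ T :=
  ⟨fun i => ⟨inter_subset_right, hdiam ▸
      (diam_mono inter_subset_left (hb.subset (hF.1 i).1)).trans_lt (hF.1 i).2⟩,
    fun x hx => by simpa only [mem_inter_iff, hx, and_true] using hF.2 x (hTS hx)⟩

theorem nontrivial_of_diam_pos {S : Set X} (hd : 0 < diam S) : Nontrivial X := by
  obtain ⟨x, -, y, -, hxy⟩ := not_subsingleton_iff.mp fun h => hd.ne' (diam_subsingleton h)
  exact nontrivial_of_ne x y hxy

end MetricSpace

theorem IsPreconnected.inter_frontier_nonempty {X : Type*} [TopologicalSpace X] {s t : Set X}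
    (hs : IsPreconnected s) (hst : (s ∩ t).Nonempty) (hs't : (s \ t).Nonempty) :
    (s ∩ frontier t).Nonempty := by
  by_contra! h
  have hcover : s ⊆ interior t ∪ (closure t)ᶜ := fun x hx => by
    have : x ∉ frontier t := fun hxt => (h.subset ⟨hx, hxt⟩ :)
    by_cases hxt : x ∈ closure t
    · exact .inl (by_contra fun hxi => this ⟨hxt, hxi⟩)
    · exact .inr hxt
  obtain ⟨x, hxs, hxt⟩ := hst
  obtain ⟨y, hys, hyt⟩ := hs't
  obtain ⟨z, -, hzi, hzc⟩ := hs _ _ isOpen_interior isClosed_closure.isOpen_compl hcover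
    ⟨x, hxs, (hcover hxs).resolve_right (not_not.mpr (subset_closure hxt))⟩
    ⟨y, hys, (hcover hys).resolve_left (fun hyi => hyt (interior_subset hyi))⟩
  exact hzc (interior_subset_closure hzi)

section NormedSpace

variable {E : Type*} [NormedAddCommGroup E] [NormedSpace ℝ E]

theorem Bornology.IsBounded.exists_nonneg_add_smul_mem_frontier {S : Set E}
    (hb : Bornology.IsBounded S) {x v : E} (hx : x ∈ S) (hv : v ≠ 0) :
    ∃ t : ℝ, 0 ≤ t ∧ x + t • v ∈ frontier S := by
  obtain ⟨r, hr⟩ := hb.subset_closedBall x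
  have hr0 : 0 ≤ r := by simpa using hr hx
  have hvpos : 0 < ‖v‖ := norm_pos_iff.mpr hv
  have hfar : x + ((r + 1) / ‖v‖) • v ∉ S := fun hS => by
    have := hr hS
    rw [mem_closedBall, dist_eq_norm, add_sub_cancel_left, norm_smul, Real.norm_of_nonneg
      (by positivity), div_mul_cancel₀ _ hvpos.ne'] at this
    linarith
  have hray : IsPreconnected ((fun t : ℝ => x + t • v) '' Ici 0) :=
    isPreconnected_Ici.image _ (by fun_prop)
  obtain ⟨_, ⟨t, ht, rfl⟩, hfr⟩ := hray.inter_frontier_nonempty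
    ⟨x, ⟨0, self_mem_Ici, by simp⟩, hx⟩
    ⟨_, ⟨(r + 1) / ‖v‖, mem_Ici.mpr (by positivity), rfl⟩, hfar⟩
  exact ⟨t, ht, hfr⟩

theorem Bornology.IsBounded.exists_mem_frontier_mem_segment [Nontrivial E] {S : Set E}
    (hb : Bornology.IsBounded S) {x : E} (hx : x ∈ S) (c : E) :
    ∃ z ∈ frontier S, x ∈ segment ℝ c z := by
  rcases eq_or_ne x c with rfl | hxc
  · obtain ⟨v, hv⟩ := exists_ne (0 : E)
    obtain ⟨t, -, hz⟩ := hb.exists_nonneg_add_smul_mem_frontier hx hv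
    exact ⟨_, hz, left_mem_segment ℝ _ _⟩
  · obtain ⟨t, ht, hz⟩ := hb.exists_nonneg_add_smul_mem_frontier hx (sub_ne_zero.mpr hxc)
    refine ⟨_, hz, mem_segment_iff_sameRay.mpr ?_⟩
    rw [add_sub_cancel_left]
    exact SameRay.sameRay_nonneg_smul_right _ ht

theorem Bornology.IsBounded.subset_convexHull_frontier [Nontrivial E] {S : Set E}
    (hb : Bornology.IsBounded S) : S ⊆ convexHull ℝ (frontier S) := fun x hx => by
  obtain ⟨z₁, hz₁, -⟩ := hb.exists_mem_frontier_mem_segment hx x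
  obtain ⟨z₂, hz₂, hx₂⟩ := hb.exists_mem_frontier_mem_segment hx z₁
  exact segment_subset_convexHull hz₁ hz₂ hx₂

theorem diam_frontier_eq_diam {S : Set E} (hcl : IsClosed S) (hb : Bornology.IsBounded S)
    (hd : 0 < diam S) : diam (frontier S) = diam S := by
  have := nontrivial_of_diam_pos hd
  refine le_antisymm (diam_mono hcl.frontier_subset hb) ?_
  calc diam S ≤ diam (convexHull ℝ (frontier S)) :=
        diam_mono hb.subset_convexHull_frontier
          (isBounded_convexHull.mpr (hb.subset hcl.frontier_subset))
    _ = diam (frontier S) := convexHull_diam _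

/-- Pushing `c` a little away from `z` stays inside `S` and adds the push length to the
distance from `z`. -/
theorem exists_lt_diam_forall_dist_le_of_mem_interior {S : Set E} {c : E}
    (hb : Bornology.IsBounded S) (hd : 0 < diam S) (hc : c ∈ interior S) :
    ∃ R < diam S, ∀ z ∈ S, dist z c ≤ R := by
  obtain ⟨ε, hε, hball⟩ := Metric.mem_nhds_iff.mp (mem_interior_iff_mem_nhds.mp hc)
  set δ := min ε (diam S)
  have hδ : 0 < δ := lt_min hε hd
  refine ⟨diam S - δ / 2, by linarith, fun z hz => ?_⟩
  rcases eq_or_ne z c with rfl | hzc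
  · rw [dist_self]
    linarith [min_le_right ε (diam S)]
  set c' := c + (δ / 2) • ‖c - z‖⁻¹ • (c - z)
  have hcc' : dist c c' = δ / 2 := by
    rw [dist_comm, dist_eq_norm, add_sub_cancel_left, norm_smul, norm_smul, norm_inv, norm_norm,
      inv_mul_cancel₀ (norm_ne_zero_iff.mpr (sub_ne_zero.mpr hzc.symm)), mul_one,
      Real.norm_of_nonneg (half_pos hδ).le]
  have hc' : c' ∈ S :=
    hball (by rw [mem_ball, dist_comm, hcc']; linarith [min_le_left ε (diam S)])
  have hseg : c ∈ segment ℝ z c' := by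
    rw [mem_segment_iff_sameRay, add_sub_cancel_left, smul_smul]
    exact SameRay.sameRay_nonneg_smul_right _ (by positivity)
  linarith [dist_add_dist_of_mem_segment hseg, dist_le_diam_of_mem hb hz hc']

theorem dist_le_max_of_mem_segment {c z w p q : E} (hp : p ∈ segment ℝ c z)
    (hq : q ∈ segment ℝ c w) : dist p q ≤ max (max (dist z c) (dist w c)) (dist z w) := by
  rw [← convexHull_pair] at hp hq
  obtain ⟨p', hp', q', hq', hpq⟩ := convexHull_exists_dist_ge2 hp hq
  refine hpq.trans ?_
  rcases hp' with rfl | rfl <;> rcases hq' with rfl | rfl <;>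
    simp [dist_comm]

theorem diam_inter_biUnion_segment_lt {S F : Set E} {c : E} (hb : Bornology.IsBounded S)
    (hd : 0 < diam S) (hc : c ∈ interior S) (hFS : F ⊆ S) (hF : diam F < diam S) :
    diam (S ∩ ⋃ z ∈ F, segment ℝ c z) < diam S := by
  obtain ⟨R, hRS, hR⟩ := exists_lt_diam_forall_dist_le_of_mem_interior hb hd hc
  have hdist : ∀ p ∈ S ∩ ⋃ z ∈ F, segment ℝ c z, ∀ q ∈ S ∩ ⋃ z ∈ F, segment ℝ c z,
      dist p q ≤ max R (diam F) := by
    rintro p ⟨-, hp⟩ q ⟨-, hq⟩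
    obtain ⟨z, hz, hpz⟩ := mem_iUnion₂.mp hp
    obtain ⟨w, hw, hqw⟩ := mem_iUnion₂.mp hq
    exact (dist_le_max_of_mem_segment hpz hqw).trans <| max_le_max
      (max_le (hR z (hFS hz)) (hR w (hFS hw))) (dist_le_diam_of_mem (hb.subset hFS) hz hw)
  exact (diam_le_of_forall_dist_le (le_max_of_le_right diam_nonneg) hdist).trans_lt
    (max_lt hRS hF)

theorem IsBorsukFamily.inter_biUnion_segment {S : Set E} {c : E} {k m : ℕ}
    {F : Fin m → Set E} (hF : IsBorsukFamily (frontier S) k F) (hcl : IsClosed S)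
    (hb : Bornology.IsBounded S) (hd : 0 < diam S) (hc : c ∈ interior S) :
    IsBorsukFamily S k fun i => S ∩ ⋃ z ∈ F i, segment ℝ c z := by
  have := nontrivial_of_diam_pos hd
  refine ⟨fun i => ⟨inter_subset_left, diam_inter_biUnion_segment_lt hb hd hc
    ((hF.1 i).1.trans hcl.frontier_subset) (diam_frontier_eq_diam hcl hb hd ▸ (hF.1 i).2)⟩,
    fun x hx => ?_⟩
  obtain ⟨z, hz, hxz⟩ := hb.exists_mem_frontier_mem_segment hx c
  exact (hF.2 z hz).trans (ncard_le_ncard fun i hi => ⟨hx, mem_iUnion₂.mpr ⟨z, hi, hxz⟩⟩)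

end NormedSpace

theorem borsuk_eq_borsuk_frontier_general {E : Type*} [NormedAddCommGroup E] [NormedSpace ℝ E]
    (S : Set E)
    (hcl : IsClosed S) (hb : Bornology.IsBounded S) (hd : 0 < Metric.diam S)
    (k : ℕ) :
    borsukNum S k = borsukNum (frontier S) k := by
  rcases (interior S).eq_empty_or_nonempty with hint | ⟨c, hc⟩
  · rw [hcl.frontier_eq, hint, sdiff_empty]
  exact le_antisymm
    (borsukNum_le_of_forall_isBorsukFamily fun _ _ hF =>
      ⟨_, hF.inter_biUnion_segment hcl hb hd hc⟩)
    (borsukNum_le_of_forall_isBorsukFamily fun _ _ hF =>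
      ⟨_, hF.inter_of_diam_eq hb hcl.frontier_subset (diam_frontier_eq_diam hcl hb hd)⟩)

theorem borsuk_eq_borsuk_frontier {E : Type*} [NormedAddCommGroup E] [NormedSpace ℝ E]
    [FiniteDimensional ℝ E] (S : Set E)
    (hcl : IsClosed S) (hb : Bornology.IsBounded S) (hd : 0 < Metric.diam S)
    (k : ℕ) (hk : 0 < k) :
    borsukNum S k = borsukNum (frontier S) k :=
  borsuk_eq_borsuk_frontier_general S hcl hb hd k
end

section
/- The Lens Cutting Condition (LCC) holds in Euclidean space ℝ^n: for any two distinct points u, v ∈ ℝ^n with |u − v| ≤ 1, any point x in the intersection of the unit spheres centered at u and v, and any ε > 0, there exists w ∈ ℝ^n such that x is not in the closed unit ball B(w) centered at w, but B(w) contains (B(u) ∩ B(v)) \ B(x, ε), where B(x, ε) is the open ball of radius ε around x. -/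
/-!
By Apollonius's theorem the lens `B(u) ∩ B(v)` lies in the closed ball about the midpoint `m`
of `u` and `v` whose boundary passes through the corner `x`; its radius `r = dist x m` satisfies
`r² = 1 - (|u - v| / 2)²`, so `0 < r < 1`. It therefore suffices to cut a ball `B(m, r)` with
`r < 1` at a boundary point `x`. Take `w = m - t (x - m)` on the ray from `x` through `m`: for `y`
in `B(m, r)` at distance at least `ε` from `x` one gets `|y - w|² ≤ ((1 + t) r)² - t ε²`, while
`|x - w| = (1 + t) r`. At `(1 + t) r = 1` the bound is `< 1`, so by continuity a slightly larger
`t` pushes `x` out of `B(w)` and keeps the rest of the lens inside.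
-/

open Set Metric Filter Topology

section LensInBall

variable {V P : Type*} [NormedAddCommGroup V] [InnerProductSpace ℝ V] [MetricSpace P]
  [NormedAddTorsor V P]

theorem dist_midpoint_sq_eq {u v y : P} :
    dist y (midpoint ℝ u v) ^ 2 = (dist y u ^ 2 + dist y v ^ 2) / 2 - (dist u v / 2) ^ 2 := by
  linarith [EuclideanGeometry.dist_sq_add_dist_sq_eq_two_mul_dist_midpoint_sq_add_half_dist_sq
    y u v]

theorem closedBall_inter_closedBall_subset_closedBall_midpoint {u v x : P} {ρ : ℝ}
    (hxu : x ∈ sphere u ρ) (hxv : x ∈ sphere v ρ) :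
    closedBall u ρ ∩ closedBall v ρ ⊆ closedBall (midpoint ℝ u v) (dist x (midpoint ℝ u v)) := by
  rintro y ⟨hyu, hyv⟩
  rw [mem_sphere] at hxu hxv
  rw [mem_closedBall] at hyu hyv ⊢
  have hsq : dist y (midpoint ℝ u v) ^ 2 ≤ dist x (midpoint ℝ u v) ^ 2 := by
    rw [dist_midpoint_sq_eq, dist_midpoint_sq_eq, hxu, hxv]
    gcongr
  exact le_of_sq_le_sq hsq dist_nonneg

end LensInBall

section CutBall

variable {E : Type*} [NormedAddCommGroup E] [InnerProductSpace ℝ E]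

theorem dist_sub_smul_sq_le {m x y : E} {r ε t : ℝ} (hε : 0 ≤ ε) (ht : 0 ≤ t)
    (hx : x ∈ sphere m r) (hy : y ∈ closedBall m r \ ball x ε) :
    dist y (m - t • (x - m)) ^ 2 ≤ ((1 + t) * r) ^ 2 - t * ε ^ 2 := by
  obtain ⟨hym, hyx⟩ := hy
  rw [mem_sphere, dist_eq_norm] at hx
  rw [mem_closedBall, dist_eq_norm] at hym
  rw [mem_ball, not_lt, dist_eq_norm] at hyx
  have hyx2 : ε ^ 2 ≤ ‖y - m‖ ^ 2 - 2 * inner ℝ (y - m) (x - m) + r ^ 2 := by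
    rw [← hx, ← norm_sub_sq_real, sub_sub_sub_cancel_right]
    gcongr
  have hym2 : ‖y - m‖ ^ 2 ≤ r ^ 2 := by gcongr
  have hyw : y - (m - t • (x - m)) = (y - m) + t • (x - m) := by abel
  rw [dist_eq_norm, hyw, norm_add_sq_real, real_inner_smul_right, norm_smul, Real.norm_eq_abs,
    abs_of_nonneg ht, hx]
  nlinarith

theorem exists_one_lt_mul_and_sq_sub_lt {r ε : ℝ} (hr₀ : 0 < r) (hr₁ : r < 1) (hε : 0 < ε) :
    ∃ t : ℝ, 0 ≤ t ∧ 1 < (1 + t) * r ∧ ((1 + t) * r) ^ 2 - t * ε ^ 2 < 1 := by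
  set t₀ := r⁻¹ - 1
  have ht₀ : 0 < t₀ := sub_pos.2 (one_lt_inv₀ hr₀ |>.2 hr₁)
  have hr : (1 + t₀) * r = 1 := by simp [t₀, hr₀.ne']
  have hg : ((1 + t₀) * r) ^ 2 - t₀ * ε ^ 2 < 1 := by
    rw [hr]
    nlinarith [mul_pos ht₀ (pow_pos hε 2)]
  have hcont : Continuous fun t : ℝ => ((1 + t) * r) ^ 2 - t * ε ^ 2 := by fun_prop
  obtain ⟨t, hgt, ht⟩ :=
    ((hcont.tendsto t₀).eventually_lt_const hg |>.filter_mono nhdsWithin_le_nhds).and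
      self_mem_nhdsWithin |>.exists (f := 𝓝[>] t₀)
  refine ⟨t, ht₀.le.trans ht.le, ?_, hgt⟩
  calc 1 = (1 + t₀) * r := hr.symm
    _ < (1 + t) * r := by gcongr

theorem exists_closedBall_cut_of_mem_sphere {m x : E} {r ε : ℝ} (hr₀ : 0 < r) (hr₁ : r < 1)
    (hx : x ∈ sphere m r) (hε : 0 < ε) :
    ∃ w : E, x ∉ closedBall w 1 ∧ closedBall m r \ ball x ε ⊆ closedBall w 1 := by
  obtain ⟨t, ht, hxw, hyw⟩ := exists_one_lt_mul_and_sq_sub_lt hr₀ hr₁ hε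
  refine ⟨m - t • (x - m), ?_, fun y hy => ?_⟩
  · have hdist : dist x (m - t • (x - m)) = (1 + t) * r := by
      rw [mem_sphere, dist_eq_norm] at hx
      rw [dist_eq_norm, show x - (m - t • (x - m)) = (1 + t) • (x - m) by module, norm_smul,
        Real.norm_of_nonneg (by linarith), hx]
    rw [mem_closedBall, hdist, not_le]
    exact hxw
  · have hy2 := dist_sub_smul_sq_le hε.le ht hx hy
    rw [mem_closedBall]
    nlinarith [dist_nonneg (x := y) (y := m - t • (x - m))]

end CutBall

/-- The Lens Cutting Condition (LCC) holds in Euclidean space. -/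
theorem lcc_euclidean (n : ℕ) (u v x : EuclideanSpace ℝ (Fin n))
    (huv : u ≠ v) (hd : dist u v ≤ 1)
    (hxu : x ∈ sphere u 1) (hxv : x ∈ sphere v 1)
    (ε : ℝ) (hε : 0 < ε) :
    ∃ w : EuclideanSpace ℝ (Fin n), x ∉ closedBall w 1 ∧
      (closedBall u 1 ∩ closedBall v 1) \ ball x ε ⊆ closedBall w 1 := by
  set m := midpoint ℝ u v
  have hr : dist x m ^ 2 = 1 - (dist u v / 2) ^ 2 := by
    rw [dist_midpoint_sq_eq, mem_sphere.1 hxu, mem_sphere.1 hxv]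
    ring
  have huv₀ : 0 < dist u v := dist_pos.2 huv
  have hr₀ : 0 < dist x m := by nlinarith [dist_nonneg (x := x) (y := m)]
  have hr₁ : dist x m < 1 := by nlinarith [dist_nonneg (x := x) (y := m)]
  obtain ⟨w, hxw, hcut⟩ := exists_closedBall_cut_of_mem_sphere hr₀ hr₁ (mem_sphere.2 rfl) hε
  exact ⟨w, hxw, (sdiff_subset_sdiff_left
    (closedBall_inter_closedBall_subset_closedBall_midpoint hxu hxv)).trans hcut⟩
end

section
/- Let S be a nonempty bounded set of diameter 1 in a finite-dimensional real normed space. S is complete (i.e., no set of diameter 1 properly contains S) if and only if S = 𝔹S, where 𝔹S is the intersection of all closed unit balls centered at points of S. -/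
/-!
Every point of a bounded set `S` lies within `diam S` of all of `S`, so `S ⊆ 𝔹S`. If `S` is
complete, a point `x ∈ 𝔹S \ S` could be added to `S` without raising the diameter, which is
impossible. Conversely, any proper superset `T` of `S` with the same diameter is bounded
(its diameter is not the junk value `0`), so all of `T` lies in `𝔹S = S`.
-/

open Set

/-- A bounded set is (diametrically) complete if no set of the same diameter
properly contains it. -/
def IsDiamComplete {X : Type*} [MetricSpace X] (C : Set X) : Prop :=
  ¬ ∃ T : Set X, C ⊂ T ∧ Metric.diam T = Metric.diam C

open Metric Bornology

section PseudoMetric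

variable {X : Type*} [PseudoMetricSpace X] {S T : Set X}

theorem subset_iInter_closedBall_diam_of_subset (hT : IsBounded T) (hST : S ⊆ T) :
    T ⊆ ⋂ p ∈ S, closedBall p (diam T) := fun _ hx ↦
  mem_iInter₂.2 fun _ hp ↦ dist_le_diam_of_mem hT hx (hST hp)

theorem diam_insert_of_forall_dist_le (hS : IsBounded S) {x : X}
    (hx : ∀ p ∈ S, dist x p ≤ diam S) : diam (insert x S) = diam S := by
  refine le_antisymm (diam_le_of_forall_dist_le diam_nonneg ?_)
    (diam_mono (subset_insert x S) (hS.insert x))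
  rintro a (rfl | ha) b (rfl | hb)
  · simp [diam_nonneg]
  · exact hx b hb
  · exact dist_comm a b ▸ hx a ha
  · exact dist_le_diam_of_mem hS ha hb

end PseudoMetric

theorem isDiamComplete_iff_eq_iInter_closedBall_diam {X : Type*} [MetricSpace X] {S : Set X}
    (hS : IsBounded S) (hd : diam S ≠ 0) :
    IsDiamComplete S ↔ S = ⋂ p ∈ S, closedBall p (diam S) := by
  constructor
  · intro hc
    refine (subset_iInter_closedBall_diam_of_subset hS subset_rfl).antisymm fun x hx ↦ ?_
    by_contra hxS
    have hdist : ∀ p ∈ S, dist x p ≤ diam S := by simpa using hx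
    exact hc ⟨insert x S, ssubset_insert hxS, diam_insert_of_forall_dist_le hS hdist⟩
  · rintro hS_eq ⟨T, hST, hT⟩
    have hTb : IsBounded T := by
      by_contra hunb
      exact hd (hT ▸ diam_eq_zero_of_unbounded hunb)
    have hTS : T ⊆ S := hS_eq ▸ hT ▸ subset_iInter_closedBall_diam_of_subset hTb hST.subset
    exact hST.not_subset hTS

theorem complete_iff_spherical_intersection_general {E : Type*} [NormedAddCommGroup E]
    (S : Set E)
    (hb : Bornology.IsBounded S) (hd : Metric.diam S = 1) :
    IsDiamComplete S ↔ S = ⋂ p ∈ S, Metric.closedBall p 1 := by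
  have h := isDiamComplete_iff_eq_iInter_closedBall_diam hb (hd ▸ one_ne_zero)
  rwa [hd] at h

theorem complete_iff_spherical_intersection {E : Type*} [NormedAddCommGroup E]
    [NormedSpace ℝ E] [FiniteDimensional ℝ E] (S : Set E)
    (hne : S.Nonempty) (hb : Bornology.IsBounded S) (hd : Metric.diam S = 1) :
    IsDiamComplete S ↔ S = ⋂ p ∈ S, Metric.closedBall p 1 :=
  complete_iff_spherical_intersection_general S hb hd
end

section
/- Let C be a complete set of diameter 1 in a two-dimensional real normed plane, and suppose [a,b] and [c,d] are two disjoint diameters of C (segments of length 1 joining points of C) such that a, b, c, d appear in counterclockwise order on the boundary of C. Then the segments [a,d] and [b,c] are contained in the boundary of C and are parallel. -/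
/-!
The orientation conditions make `abcd` a convex quadrilateral, so in the plane its diagonals
cross at `p = a + α (c - a) = b + t (d - b)` with `α, t ∈ (0, 1)`. Writing `a - b` and `c - d`
through `p`, and using that the diagonals are no longer than the diameter `1`, the triangle
inequality forces `t = 1 - α`. Then `a - b = α (a - c) + (1 - α) (d - b)` and
`d - c = (1 - α) (a - c) + α (d - b)`, so a functional of norm `≤ 1` with `f (a - b) = 1` is `1`
on `a - c` and `d - b`, hence on `d - c`, hence on the difference of the points with equal
parameter on `[a, d]` and `[b, c]`. These points of `C` are thus at distance `diam C`, which
keeps them off the interior; and `(1 - α) (d - a) = α (c - b)`.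
-/

open Set

namespace AlternatingMap

variable {R M : Type*} [CommRing R] [AddCommGroup M] [Module R M]

def toBilin (ω : M [⋀^Fin 2]→ₗ[R] R) : LinearMap.BilinForm R M :=
  LinearMap.mk₂ R (fun x y => ω ![x, y])
    (fun x x' y => ω.map_vecCons_add _ x x')
    (fun r x y => ω.map_vecCons_smul _ r x)
    (fun x y y' => by simpa using (ω.curryLeft x).map_vecCons_add ![] y y')
    (fun r x y => by simpa using (ω.curryLeft x).map_vecCons_smul ![] r y)

@[simp]
theorem toBilin_apply (ω : M [⋀^Fin 2]→ₗ[R] R) (x y : M) : ω.toBilin x y = ω ![x, y] := rfl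

theorem isAlt_toBilin (ω : M [⋀^Fin 2]→ₗ[R] R) : ω.toBilin.IsAlt := fun x =>
  ω.map_eq_zero_of_eq ![x, x] (i := 0) (j := 1) rfl (by decide)

end AlternatingMap

namespace LinearMap.BilinForm.IsAlt

variable {K V : Type*} [Field K] [AddCommGroup V] [Module K V] {B : LinearMap.BilinForm K V}

theorem smul_eq_of_finrank_eq_two (hB : B.IsAlt) (hV : Module.finrank K V = 2) {u v : V}
    (huv : B u v ≠ 0) (w : V) : B u v • w = B w v • u + B u w • v := by
  have hli : LinearIndependent K ![u, v] := by
    rw [LinearIndependent.pair_iff]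
    intro s t hst
    have hs := congrArg (B · v) hst
    have ht := congrArg (B u ·) hst
    simp only [map_add, map_smul, LinearMap.add_apply, LinearMap.smul_apply, hB.self_eq_zero,
      smul_eq_mul, mul_zero, add_zero, zero_add, map_zero, LinearMap.zero_apply] at hs ht
    exact ⟨(mul_eq_zero.mp hs).resolve_right huv, (mul_eq_zero.mp ht).resolve_right huv⟩
  have hw : w ∈ Submodule.span K {u, v} := by
    rw [← Matrix.range_cons_cons_empty, hli.span_eq_top_of_card_eq_finrank (by simp [hV])]
    trivial
  obtain ⟨s, t, rfl⟩ := Submodule.mem_span_pair.mp hw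
  simp only [map_add, map_smul, LinearMap.add_apply, LinearMap.smul_apply, hB.self_eq_zero,
    smul_eq_mul]
  module

theorem openSegment_inter_nonempty_of_finrank_eq_two [LinearOrder K] [IsStrictOrderedRing K]
    (hB : B.IsAlt) (hV : Module.finrank K V = 2) {a b c d : V}
    (h1 : 0 < B (b - a) (c - a)) (h2 : 0 < B (c - b) (d - b))
    (h3 : 0 < B (d - c) (a - c)) (h4 : 0 < B (a - d) (b - d)) :
    (openSegment K a c ∩ openSegment K b d).Nonempty := by
  set D := B (c - a) (d - b)
  set α := B (b - a) (d - b) / D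
  set t := B (b - a) (c - a) / D
  have hanti : ∀ x y, -B x y = B y x := hB.neg_eq
  have hnum : B (b - a) (d - b) = B (a - d) (b - d) := by
    simp only [map_sub, LinearMap.sub_apply, hB.self_eq_zero]
    linarith [hanti a b, hanti a d, hanti b d]
  have hD₁ : D = B (a - d) (b - d) + B (c - b) (d - b) := by
    simp only [D, map_sub, LinearMap.sub_apply, hB.self_eq_zero]
    linarith [hanti a b, hanti a d, hanti b d, hanti b c, hanti c d]
  have hD₂ : D = B (b - a) (c - a) + B (d - c) (a - c) := by
    simp only [D, map_sub, LinearMap.sub_apply, hB.self_eq_zero]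
    linarith [hanti a b, hanti a d, hanti a c, hanti b c, hanti c d]
  have hD : 0 < D := by linarith
  have hcramer := hB.smul_eq_of_finrank_eq_two hV hD.ne' (b - a)
  have hcross : a + α • (c - a) = b + t • (d - b) := by
    apply smul_right_injective V hD.ne'
    simp only [α, t, smul_add, smul_smul, mul_div_cancel₀ _ hD.ne']
    linear_combination (norm := module) -hcramer + (hanti (c - a) (b - a)) • (d - b)
  refine ⟨a + α • (c - a), ?_, ?_⟩
  · rw [openSegment_eq_image']
    refine ⟨α, ⟨div_pos (by linarith) hD, (div_lt_one hD).mpr (by linarith)⟩, rfl⟩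
  · rw [hcross, openSegment_eq_image']
    exact ⟨t, ⟨div_pos h1 hD, (div_lt_one hD).mpr (by linarith)⟩, rfl⟩

end LinearMap.BilinForm.IsAlt

theorem exists_sub_eq_smul_sub_of_diagonal_ratio {K V : Type*} [Field K] [AddCommGroup V]
    [Module K V] {a b c d : V} {α : K} (hα : α ≠ 1)
    (hp : a + α • (c - a) = b + (1 - α) • (d - b)) : ∃ t : K, d - a = t • (c - b) := by
  have h : (1 - α) • (d - a) = α • (c - b) := by linear_combination (norm := module) -hp
  refine ⟨(1 - α)⁻¹ * α, ?_⟩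
  rw [mul_smul, ← h, inv_smul_smul₀ (sub_ne_zero.mpr hα.symm)]

open Filter Topology Metric

theorem Metric.isBounded_of_diam_pos_s8 {X : Type*} [PseudoMetricSpace X] {s : Set X}
    (hs : 0 < diam s) : Bornology.IsBounded s := by
  by_contra h
  exact hs.ne' (diam_eq_zero_of_unbounded h)

section NormedSpace

variable {E : Type*} [NormedAddCommGroup E] [NormedSpace ℝ E]

theorem IsDiamComplete.convex {C : Set E} (hC : IsDiamComplete C) : Convex ℝ C := by
  by_contra h
  exact hC ⟨convexHull ℝ C, (subset_convexHull ℝ C).ssubset_of_ne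
    (fun he => h (he ▸ convex_convexHull ℝ C)), convexHull_diam C⟩

theorem mem_frontier_of_diam_le_dist {C : Set E} (hC : 0 < diam C) {x y : E} (hx : x ∈ C)
    (hy : y ∈ C) (h : diam C ≤ dist x y) : x ∈ frontier C := by
  refine ⟨subset_closure hx, fun hint => ?_⟩
  have hlim : Tendsto (fun δ : ℝ => x + δ • (x - y)) (𝓝[>] 0) (𝓝 x) := by
    have hcont : Continuous (fun δ : ℝ => x + δ • (x - y)) := by fun_prop
    simpa using (hcont.tendsto 0).mono_left nhdsWithin_le_nhds
  obtain ⟨δ, hδC, hδ : 0 < δ⟩ :=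
    ((hlim.eventually (mem_interior_iff_mem_nhds.mp hint)).and self_mem_nhdsWithin).exists
  have hfar : dist (x + δ • (x - y)) y = (1 + δ) * dist x y := by
    rw [dist_eq_norm, dist_eq_norm, show x + δ • (x - y) - y = (1 + δ) • (x - y) by module,
      norm_smul_of_nonneg (by linarith)]
  have := dist_le_diam_of_mem (isBounded_of_diam_pos_s8 hC) hδC hy
  nlinarith

theorem segment_subset_frontier {C : Set E} (hconv : Convex ℝ C) (hC : 0 < diam C)
    {a b c d : E} (ha : a ∈ C) (hb : b ∈ C) (hc : c ∈ C) (hd : d ∈ C)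
    (h : ∀ θ ∈ Icc (0 : ℝ) 1, diam C ≤ dist ((1 - θ) • a + θ • d) ((1 - θ) • b + θ • c)) :
    segment ℝ a d ⊆ frontier C := by
  rw [segment_eq_image]
  rintro _ ⟨θ, hθ, rfl⟩
  have h1θ : 0 ≤ 1 - θ := sub_nonneg.mpr hθ.2
  exact mem_frontier_of_diam_le_dist hC (hconv ha hd h1θ hθ.1 (by ring))
    (hconv hb hc h1θ hθ.1 (by ring)) (h θ hθ)

theorem exists_diagonal_ratio_of_mem_openSegment_inter {a b c d p : E}
    (hp : p ∈ openSegment ℝ a c ∩ openSegment ℝ b d) (hac : ‖a - c‖ ≤ 1) (hbd : ‖b - d‖ ≤ 1)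
    (hab : ‖a - b‖ = 1) (hcd : ‖c - d‖ = 1) :
    ∃ α ∈ Ioo (0 : ℝ) 1, a + α • (c - a) = b + (1 - α) • (d - b) := by
  rw [openSegment_eq_image', openSegment_eq_image'] at hp
  obtain ⟨⟨α, hα, rfl⟩, t, ht, hpt⟩ := hp
  have hsum : ∀ {r s : ℝ} {u v : E}, 0 ≤ r → 0 ≤ s → ‖u‖ ≤ 1 → ‖v‖ ≤ 1 →
      ‖r • u + s • v‖ ≤ r + s := fun hr hs hu hv =>
    (norm_add_le _ _).trans (by rw [norm_smul_of_nonneg hr, norm_smul_of_nonneg hs]; nlinarith)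
  have hab' : a - b = α • (a - c) + t • (d - b) := by linear_combination (norm := module) -hpt
  have hcd' : c - d = (1 - α) • (c - a) + (1 - t) • (b - d) := by
    linear_combination (norm := module) -hpt
  have h1 := hsum hα.1.le ht.1.le hac (norm_sub_rev b d ▸ hbd)
  have h2 := hsum (sub_nonneg.mpr hα.2.le) (sub_nonneg.mpr ht.2.le) (norm_sub_rev a c ▸ hac) hbd
  rw [← hab', hab] at h1
  rw [← hcd', hcd] at h2
  exact ⟨α, hα, hpt.symm.trans (by rw [show t = 1 - α by linarith])⟩

theorem one_le_dist_of_diagonal_ratio {a b c d : E} {α : ℝ} (hα : α ∈ Ioo 0 1)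
    (hp : a + α • (c - a) = b + (1 - α) • (d - b)) (hac : ‖a - c‖ ≤ 1) (hbd : ‖b - d‖ ≤ 1)
    (hab : ‖a - b‖ = 1) (θ : ℝ) :
    1 ≤ dist ((1 - θ) • a + θ • d) ((1 - θ) • b + θ • c) := by
  obtain ⟨f, hf, hfab⟩ := exists_dual_vector'' ℝ (a - b)
  have hf_le : ∀ v, f v ≤ ‖v‖ := fun v =>
    (Real.le_norm_self _).trans ((f.le_of_opNorm_le hf v).trans_eq (one_mul _))
  have hac' := (hf_le (a - c)).trans hac
  have hdb' := (hf_le (d - b)).trans (norm_sub_rev d b ▸ hbd)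
  have hab' : a - b = α • (a - c) + (1 - α) • (d - b) := by linear_combination (norm := module) hp
  have hdc' : d - c = (1 - α) • (a - c) + α • (d - b) := by
    linear_combination (norm := module) -hp
  have hxy : (1 - θ) • a + θ • d - ((1 - θ) • b + θ • c) = (1 - θ) • (a - b) + θ • (d - c) := by
    module
  rw [hab, RCLike.ofReal_real_eq_id, id, hab', map_add, map_smul, map_smul, smul_eq_mul,
    smul_eq_mul] at hfab
  have hfac : f (a - c) = 1 := by nlinarith [hα.1, hα.2]
  have hfdb : f (d - b) = 1 := by nlinarith [hα.1, hα.2]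
  calc 1 = f ((1 - θ) • (a - b) + θ • (d - c)) := by
        simp only [hab', hdc', map_add, map_smul, smul_eq_mul, hfac, hfdb]; ring
    _ ≤ _ := by rw [dist_eq_norm, ← hxy]; exact hf_le _

end NormedSpace

theorem disjoint_diameters_general {E : Type*} [NormedAddCommGroup E] [NormedSpace ℝ E]
    (hdim : Module.finrank ℝ E = 2)
    (C : Set E) (hC : IsDiamComplete C) (hd : Metric.diam C = 1)
    -- an orientation of the plane, given by a nonzero alternating 2-form
    (ω : E [⋀^Fin 2]→ₗ[ℝ] ℝ)
    (a b c d : E) (ha : a ∈ C) (hb : b ∈ C) (hc : c ∈ C) (hdd : d ∈ C)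
    (hab : dist a b = 1) (hcd : dist c d = 1)
    -- a, b, c, d are in counterclockwise order on the boundary of C
    (h1 : 0 < ω ![b - a, c - a]) (h2 : 0 < ω ![c - b, d - b])
    (h3 : 0 < ω ![d - c, a - c]) (h4 : 0 < ω ![a - d, b - d]) :
    segment ℝ a d ⊆ frontier C ∧ segment ℝ b c ⊆ frontier C ∧
      ∃ t : ℝ, d - a = t • (c - b) := by
  have hdiam : 0 < diam C := hd ▸ one_pos
  have hle : ∀ ⦃x⦄, x ∈ C → ∀ ⦃y⦄, y ∈ C → ‖x - y‖ ≤ 1 := fun x hx y hy => by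
    rw [← dist_eq_norm, ← hd]
    exact dist_le_diam_of_mem (isBounded_of_diam_pos_s8 hdiam) hx hy
  obtain ⟨p, hp⟩ := ω.isAlt_toBilin.openSegment_inter_nonempty_of_finrank_eq_two hdim h1 h2 h3 h4
  rw [dist_eq_norm] at hab hcd
  obtain ⟨α, hα, hratio⟩ :=
    exists_diagonal_ratio_of_mem_openSegment_inter hp (hle ha hc) (hle hb hdd) hab hcd
  have hfar := one_le_dist_of_diagonal_ratio hα hratio (hle ha hc) (hle hb hdd) hab
  refine ⟨segment_subset_frontier hC.convex hdiam ha hb hc hdd fun θ _ => hd ▸ hfar θ,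
    segment_subset_frontier hC.convex hdiam hb ha hdd hc fun θ _ => ?_,
    exists_sub_eq_smul_sub_of_diagonal_ratio hα.2.ne hratio⟩
  rw [hd, dist_comm]
  exact hfar θ

theorem disjoint_diameters {E : Type*} [NormedAddCommGroup E] [NormedSpace ℝ E]
    (hdim : Module.finrank ℝ E = 2)
    (C : Set E) (hC : IsDiamComplete C) (hd : Metric.diam C = 1)
    -- an orientation of the plane, given by a nonzero alternating 2-form
    (ω : E [⋀^Fin 2]→ₗ[ℝ] ℝ) (hω : ω ≠ 0)
    (a b c d : E) (ha : a ∈ C) (hb : b ∈ C) (hc : c ∈ C) (hdd : d ∈ C)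
    (hab : dist a b = 1) (hcd : dist c d = 1)
    (hdisj : Disjoint (segment ℝ a b) (segment ℝ c d))
    -- a, b, c, d are in counterclockwise order on the boundary of C
    (habd : a ∈ frontier C) (hbbd : b ∈ frontier C)
    (hcbd : c ∈ frontier C) (hdbd : d ∈ frontier C)
    (h1 : 0 < ω ![b - a, c - a]) (h2 : 0 < ω ![c - b, d - b])
    (h3 : 0 < ω ![d - c, a - c]) (h4 : 0 < ω ![a - d, b - d]) :
    segment ℝ a d ⊆ frontier C ∧ segment ℝ b c ⊆ frontier C ∧
      ∃ t : ℝ, d - a = t • (c - b) :=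
  disjoint_diameters_general hdim C hC hd ω a b c d ha hb hc hdd hab hcd h1 h2 h3 h4
end

section
/- Let C be a complete convex body of diameter 1 in a two-dimensional real normed plane, and let p be a point of the boundary of C. Then the set of points of C at unit distance from p is a connected arc of S(p) ∩ ∂C, where S(p) is the unit sphere centered at p. -/
open Set

/-!
Completeness gives the spherical intersection property: a point within distance `1` of all
of `C` lies in `C`. As `p` is a boundary point, some `x₀ ∈ C` is at distance `1` from `p`.
For any other `y ∈ C` at distance `1` from `p`, every point `z` of the arc of `S(p)` between
`x₀` and `y` is within distance `1` of each `c ∈ C`: writing `c` in the basis `x₀ - p, y - p`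
of the plane, either `c = p`, or `z` lies in the triangle `c x₀ y`, or the segment from `c` to
`p` or to `y` crosses the segment from `z` to `p` or to `x₀`, and then the sum of the diagonals
of the quadrilateral bounds the sum of two opposite sides. So the set is a union of arcs
through `x₀`. Its points lie on `∂C`, since `C` has no point farther than `1` from `p`.
-/

open NormedSpace AffineMap Filter Topology

namespace IsDiamComplete

variable {X : Type*} [MetricSpace X] {C : Set X}

theorem mem_of_forall_dist_le (hC : IsDiamComplete C) (hbd : Bornology.IsBounded C) {z : X}
    (hz : ∀ c ∈ C, dist z c ≤ Metric.diam C) : z ∈ C := by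
  by_contra hzC
  refine hC ⟨insert z C, ssubset_insert hzC,
    le_antisymm ?_ (Metric.diam_mono (subset_insert z C) (hbd.insert z))⟩
  refine Metric.diam_le_of_forall_dist_le Metric.diam_nonneg ?_
  rintro x (rfl | hx) y (rfl | hy)
  · simp [Metric.diam_nonneg]
  · exact hz y hy
  · exact dist_comm x y ▸ hz x hx
  · exact Metric.dist_le_diam_of_mem hbd hx hy

theorem exists_dist_eq_diam_of_mem_frontier (hC : IsDiamComplete C) (hcpt : IsCompact C)
    {p : X} (hp : p ∈ frontier C) : ∃ x ∈ C, dist p x = Metric.diam C := by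
  have hpC : p ∈ C := hcpt.isClosed.frontier_subset hp
  obtain ⟨x, hxC, hxmax⟩ := hcpt.exists_isMaxOn ⟨p, hpC⟩
    (continuous_const.dist continuous_id).continuousOn
  refine ⟨x, hxC, (Metric.dist_le_diam_of_mem hcpt.isBounded hpC hxC).antisymm ?_⟩
  by_contra! hlt
  -- a point outside `C` close enough to `p` is still within `diam C` of all of `C`
  obtain ⟨z, hzC, hzp⟩ := Metric.mem_closure_iff.1
    (frontier_subset_closure (frontier_compl C ▸ hp)) _ (sub_pos.2 hlt)
  refine hzC (hC.mem_of_forall_dist_le hcpt.isBounded fun c hc => ?_)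
  have : dist p c ≤ dist p x := hxmax hc
  linarith [dist_triangle z p c, dist_comm p z]

end IsDiamComplete

section NormedSpace
variable {E : Type*} [NormedAddCommGroup E] [NormedSpace ℝ E]

theorem notMem_interior_of_dist_eq_diam {C : Set E} (hbd : Bornology.IsBounded C) {p x : E}
    (hp : p ∈ C) (hpx : p ≠ x) (h : dist p x = Metric.diam C) : x ∉ interior C := by
  intro hx
  have hlim : Tendsto (fun ε : ℝ => x + ε • (x - p)) (𝓝[>] 0) (𝓝 x) := by
    refine Tendsto.mono_left ?_ nhdsWithin_le_nhds
    have : Continuous fun ε : ℝ => x + ε • (x - p) := by fun_prop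
    simpa using this.tendsto 0
  obtain ⟨ε, hεC, hε⟩ :=
    ((hlim.eventually (isOpen_interior.mem_nhds hx)).and self_mem_nhdsWithin).exists
  have hfar : dist p (x + ε • (x - p)) = (1 + ε) * dist p x := by
    rw [dist_eq_norm, dist_eq_norm, ← norm_smul_of_nonneg (by linarith)]
    congr 1
    module
  have := Metric.dist_le_diam_of_mem hbd hp (interior_subset hεC)
  nlinarith [dist_pos.2 hpx]

theorem dist_add_dist_le_of_mem_segment {a b x y m : E} (hab : m ∈ segment ℝ a b)
    (hxy : m ∈ segment ℝ x y) : dist a x + dist b y ≤ dist a b + dist x y := by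
  rw [← dist_add_dist_of_mem_segment hab, ← dist_add_dist_of_mem_segment hxy]
  linarith [dist_triangle a m x, dist_triangle b m y, dist_comm m b, dist_comm m x]

theorem eq_zero_of_norm_one_add_smul_add_smul_le_one {u v : E} (hu : ‖u‖ = 1)
    (huv : ‖u - v‖ ≤ 1) {a b : ℝ} (ha : 0 ≤ a) (hb : 0 ≤ b)
    (h : ‖(1 + a) • u + b • v‖ ≤ 1) : a = 0 := by
  obtain ⟨f, hf, hfu⟩ := exists_dual_vector'' ℝ u
  replace hfu : f u = 1 := by simpa [hu] using hfu
  have hf_le (w : E) : f w ≤ ‖w‖ :=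
    (Real.le_norm_self _).trans ((f.le_of_opNorm_le hf w).trans_eq (one_mul _))
  have hfv : 0 ≤ f v := by linarith [hf_le (u - v), map_sub f u v]
  have := hf_le ((1 + a) • u + b • v)
  simp only [map_add, map_smul, smul_eq_mul, hfu] at this
  nlinarith [mul_nonneg hb hfv]

theorem lineMap_ne_zero_of_norm_sub_lt_two {u v : E} (hu : ‖u‖ = 1) (hv : ‖v‖ = 1)
    (huv : ‖u - v‖ < 2) {t : ℝ} (ht : t ∈ Icc (0 : ℝ) 1) : lineMap u v t ≠ 0 := by
  intro h
  rw [lineMap_apply_module] at h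
  have hu' : u = t • (u - v) := by linear_combination (norm := module) h
  have hv' : v = (1 - t) • (v - u) := by linear_combination (norm := module) h
  rw [hu', norm_smul_of_nonneg ht.1] at hu
  rw [hv', norm_smul_of_nonneg (sub_nonneg.2 ht.2), norm_sub_rev] at hv
  linarith

theorem Submodule.span_pair_eq_top_of_finrank_eq_two (hdim : Module.finrank ℝ E = 2) {u v : E}
    (hu : ‖u‖ = 1) (hv : ‖v‖ = 1) (huv : ‖u - v‖ < 2) (hne : u ≠ v) :
    Submodule.span ℝ {u, v} = ⊤ := by
  have hind : LinearIndependent ℝ ![u, v] := by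
    refine (LinearIndependent.pair_iff' (norm_ne_zero_iff.1 (by simp [hu]))).2
      fun a hav => ?_
    have ha : |a| = 1 := by simpa [← hav, norm_smul, hu] using hv
    rcases (abs_eq zero_le_one).1 ha with rfl | rfl
    · exact hne (by simpa using hav)
    · subst hav
      norm_num [sub_neg_eq_add, ← two_smul ℝ u, norm_smul, hu] at huv
  simpa [Matrix.range_cons, pair_comm] using
    hind.span_eq_top_of_card_eq_finrank (by simp [hdim])

theorem eq_zero_of_mem_neg_cone {u v c : E} (hu : ‖u‖ = 1) (hv : ‖v‖ = 1)
    (huv : ‖u - v‖ ≤ 1) (hcu : ‖c - u‖ ≤ 1) (hcv : ‖c - v‖ ≤ 1) {α β : ℝ}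
    (hcuv : c = α • u + β • v) (hα : α ≤ 0) (hβ : β ≤ 0) : c = 0 := by
  have hα0 : α = 0 := by
    refine neg_eq_zero.1 (eq_zero_of_norm_one_add_smul_add_smul_le_one hu huv
      (neg_nonneg.2 hα) (neg_nonneg.2 hβ) ?_)
    rwa [show (1 + -α) • u + -β • v = u - c by rw [hcuv]; module, norm_sub_rev]
  have hβ0 : β = 0 := by
    refine neg_eq_zero.1 (eq_zero_of_norm_one_add_smul_add_smul_le_one hv
      (norm_sub_rev u v ▸ huv) (neg_nonneg.2 hβ) (neg_nonneg.2 hα) ?_)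
    rwa [show (1 + -β) • v + -α • u = v - c by rw [hcuv]; module, norm_sub_rev]
  simp [hcuv, hα0, hβ0]

theorem norm_sub_le_one_of_mem_triangle {u v z c : E} (hcu : ‖c - u‖ ≤ 1)
    (hcv : ‖c - v‖ ≤ 1) {μ ν α β : ℝ} (hμ : 0 < μ) (hν : 0 ≤ ν) (hμν : 1 ≤ μ + ν)
    (hzuv : z = μ • u + ν • v) (hcuv : c = α • u + β • v) (hα : 0 < α) (hβ : β ≤ 0)
    (h : μ * (1 - β) < α * (1 - ν)) : ‖z - c‖ ≤ 1 := by
  have hD : 0 < α + β - 1 := by nlinarith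
  have hA₁ : 0 ≤ α * (1 - ν) - μ * (1 - β) := by linarith
  have hA₂ : 0 ≤ ν * (α + β - 1) - β * (μ + ν - 1) := by nlinarith
  -- `z` as a convex combination of `c, u, v`, cleared of the denominator `α + β - 1`
  have key : (α + β - 1) • (z - c) = (α * (1 - ν) - μ * (1 - β)) • (u - c) +
      (ν * (α + β - 1) - β * (μ + ν - 1)) • (v - c) := by
    rw [hzuv, hcuv]; module
  have : (α + β - 1) * ‖z - c‖ ≤ (α + β - 1) * 1 := by
    calc (α + β - 1) * ‖z - c‖ = ‖(α + β - 1) • (z - c)‖ := by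
          rw [norm_smul_of_nonneg hD.le]
      _ ≤ (α * (1 - ν) - μ * (1 - β)) * ‖u - c‖ +
          (ν * (α + β - 1) - β * (μ + ν - 1)) * ‖v - c‖ := by
          rw [key, ← norm_smul_of_nonneg hA₁, ← norm_smul_of_nonneg hA₂]
          exact norm_add_le _ _
      _ ≤ (α + β - 1) * 1 := by
          rw [norm_sub_rev u, norm_sub_rev v]
          nlinarith
  exact le_of_mul_le_mul_left this hD

theorem norm_sub_le_one_of_mem_cone {u v z c : E} (hu : ‖u‖ = 1) (hv : ‖v‖ = 1)
    (hz : ‖z‖ = 1) (huv : ‖u - v‖ ≤ 1) (hzu : ‖z - u‖ ≤ 1) (hc : ‖c‖ ≤ 1)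
    (hcu : ‖c - u‖ ≤ 1) (hcv : ‖c - v‖ ≤ 1) {μ ν α β : ℝ} (hμ : 0 < μ) (hν : 0 < ν)
    (hzuv : z = μ • u + ν • v) (hcuv : c = α • u + β • v) (hside : β * μ ≤ α * ν) :
    ‖z - c‖ ≤ 1 := by
  have hμν : 1 ≤ μ + ν := by
    calc 1 = ‖z‖ := hz.symm
      _ ≤ ‖μ • u‖ + ‖ν • v‖ := hzuv ▸ norm_add_le _ _
      _ = μ + ν := by rw [norm_smul_of_nonneg hμ.le, norm_smul_of_nonneg hν.le, hu, hv]; ring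
  obtain ⟨P, hP⟩ : ∃ P, P = α * ν - β * μ := ⟨_, rfl⟩
  have hP0 : 0 ≤ P := by linarith
  rcases le_or_gt α 0 with hα | hα
  · rw [eq_zero_of_mem_neg_cone hu hv huv hcu hcv hcuv hα (by nlinarith), sub_zero, hz]
  rcases le_or_gt α (μ + P) with hαP | hαP
  · -- the segments `[c, v]` and `[z, 0]` cross
    have hμP : 0 < μ + P := by linarith
    have h := dist_add_dist_le_of_mem_segment (a := c) (b := v) (x := z) (y := 0)
      (m := (α / (μ + P)) • z)
      ⟨μ / (μ + P), P / (μ + P), by positivity, div_nonneg hP0 hμP.le, by field_simp, by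
        rw [hzuv, hcuv, hP]; match_scalars <;> field_simp; ring⟩
      ⟨α / (μ + P), 1 - α / (μ + P), by positivity,
        by rw [sub_nonneg, div_le_one hμP]; exact hαP, by ring, by simp⟩
    simp only [dist_eq_norm, sub_zero, hv, hz] at h
    linarith [norm_sub_rev c z]
  rcases le_or_gt β 0 with hβ | hβ
  · exact norm_sub_le_one_of_mem_triangle hcu hcv hμ hν.le hμν hzuv hcuv hα hβ (by nlinarith)
  rcases le_or_gt ν (β + P) with hνP | hνP
  · -- the segments `[c, 0]` and `[z, u]` cross
    have hβP : 0 < β + P := by linarith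
    have h := dist_add_dist_le_of_mem_segment (a := c) (b := 0) (x := z) (y := u)
      (m := (ν / (β + P)) • c)
      ⟨ν / (β + P), 1 - ν / (β + P), by positivity,
        by rw [sub_nonneg, div_le_one hβP]; exact hνP, by ring, by simp⟩
      ⟨β / (β + P), P / (β + P), by positivity, div_nonneg hP0 hβP.le, by field_simp, by
        rw [hzuv, hcuv, hP]; match_scalars <;> field_simp; ring⟩
    simp only [dist_eq_norm, sub_zero, zero_sub, norm_neg, hu] at h
    linarith [norm_sub_rev c z]
  · nlinarith [mul_lt_mul_of_pos_right hαP hν, mul_lt_mul_of_pos_right hνP hμ,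
      mul_le_mul_of_nonneg_left hμν hP0]

theorem norm_normalize_lineMap_sub_le_one {u v c : E} (hu : ‖u‖ = 1) (hv : ‖v‖ = 1)
    (huv : ‖u - v‖ ≤ 1) (hc : ‖c‖ ≤ 1) (hcu : ‖c - u‖ ≤ 1) (hcv : ‖c - v‖ ≤ 1)
    (hspan : c ∈ Submodule.span ℝ {u, v}) {t : ℝ} (ht : t ∈ Icc (0 : ℝ) 1) :
    ‖normalize (lineMap u v t) - c‖ ≤ 1 := by
  rcases eq_or_lt_of_le ht.1 with rfl | ht₀
  · simpa [normalize_eq_self_of_norm_eq_one hu, norm_sub_rev] using hcu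
  rcases eq_or_lt_of_le ht.2 with rfl | ht₁
  · simpa [normalize_eq_self_of_norm_eq_one hv, norm_sub_rev] using hcv
  set w := lineMap u v t with hw_def
  set z := normalize w
  have hw : w ≠ 0 := lineMap_ne_zero_of_norm_sub_lt_two hu hv (by linarith) ht
  have hz : ‖z‖ = 1 := norm_normalize_eq_one_iff.2 hw
  have hw_le : ‖w‖ ≤ 1 := by
    simpa using (convex_closedBall (0 : E) 1).lineMap_mem (by simp [hu]) (by simp [hv]) ht
  have hw_uv : w ∈ segment ℝ u v := segment_eq_image_lineMap ℝ u v ▸ mem_image_of_mem _ ht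
  have hw_z : w ∈ segment ℝ 0 z :=
    ⟨1 - ‖w‖, ‖w‖, by linarith, norm_nonneg w, by ring, by simp [z, norm_smul_normalize]⟩
  have hzu : ‖z - u‖ ≤ 1 := by
    have := dist_add_dist_le_of_mem_segment hw_z (segment_symm ℝ u v ▸ hw_uv)
    simp only [dist_eq_norm, zero_sub, norm_neg, hv, hz] at this
    linarith [norm_sub_rev v u]
  have hzv : ‖z - v‖ ≤ 1 := by
    have := dist_add_dist_le_of_mem_segment hw_z hw_uv
    simp only [dist_eq_norm, zero_sub, norm_neg, hu, hz] at this
    linarith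
  have hn : 0 < ‖w‖⁻¹ := inv_pos.2 (norm_pos_iff.2 hw)
  have hzuv : z = (‖w‖⁻¹ * (1 - t)) • u + (‖w‖⁻¹ * t) • v := by
    simp only [z, NormedSpace.normalize, hw_def, lineMap_apply_module, smul_add, smul_smul]
  obtain ⟨α, β, hcuv⟩ := Submodule.mem_span_pair.1 hspan
  rcases le_total (β * (‖w‖⁻¹ * (1 - t))) (α * (‖w‖⁻¹ * t)) with h | h
  · exact norm_sub_le_one_of_mem_cone hu hv hz huv hzu hc hcu hcv (by nlinarith)
      (by positivity) hzuv hcuv.symm h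
  · exact norm_sub_le_one_of_mem_cone hv hu hz (norm_sub_rev u v ▸ huv) hzv hc hcv hcu
      (by positivity) (by nlinarith) (by rw [hzuv, add_comm]) (by rw [← hcuv, add_comm]) h

/-- The arc of `S(p)` between `x` and `y`: the radial projection of the segment `[x, y]`. -/
noncomputable def sphereArc (p x y : E) (t : ℝ) : E :=
  p + normalize (lineMap (x - p) (y - p) t)

section sphereArc

variable {p x y : E}

theorem sphereArc_zero (hx : dist p x = 1) (y : E) : sphereArc p x y 0 = x := by
  rw [dist_eq_norm'] at hx
  simp [sphereArc, normalize_eq_self_of_norm_eq_one hx]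

theorem sphereArc_one (x : E) (hy : dist p y = 1) : sphereArc p x y 1 = y := by
  rw [dist_eq_norm'] at hy
  simp [sphereArc, normalize_eq_self_of_norm_eq_one hy]

theorem lineMap_sub_ne_zero (hx : dist p x = 1) (hy : dist p y = 1) (hxy : dist x y < 2)
    {t : ℝ} (ht : t ∈ Icc (0 : ℝ) 1) : lineMap (x - p) (y - p) t ≠ 0 := by
  rw [dist_eq_norm'] at hx hy
  rw [dist_eq_norm, ← sub_sub_sub_cancel_right x y p] at hxy
  exact lineMap_ne_zero_of_norm_sub_lt_two hx hy hxy ht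

theorem dist_sphereArc_eq_one (hx : dist p x = 1) (hy : dist p y = 1) (hxy : dist x y < 2)
    {t : ℝ} (ht : t ∈ Icc (0 : ℝ) 1) : dist p (sphereArc p x y t) = 1 := by
  rw [dist_eq_norm', sphereArc, add_sub_cancel_left, norm_normalize_eq_one_iff]
  exact lineMap_sub_ne_zero hx hy hxy ht

theorem continuousOn_sphereArc (hx : dist p x = 1) (hy : dist p y = 1) (hxy : dist x y < 2) :
    ContinuousOn (sphereArc p x y) (Icc 0 1) :=
  continuousOn_const.add <| (ContinuousOn.inv₀ (by fun_prop) fun _ ht =>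
    norm_ne_zero_iff.2 (lineMap_sub_ne_zero hx hy hxy ht)).smul (by fun_prop)

theorem dist_sphereArc_le_one (hdim : Module.finrank ℝ E = 2) (hx : dist p x = 1)
    (hy : dist p y = 1) (hxy : dist x y ≤ 1) {c : E} (hcp : dist c p ≤ 1) (hcx : dist c x ≤ 1)
    (hcy : dist c y ≤ 1) {t : ℝ} (ht : t ∈ Icc (0 : ℝ) 1) :
    dist (sphereArc p x y t) c ≤ 1 := by
  rcases eq_or_ne x y with rfl | hne
  · rw [dist_comm]
    simpa [sphereArc, normalize_eq_self_of_norm_eq_one (dist_eq_norm' p x ▸ hx)] using hcx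
  rw [dist_eq_norm'] at hx hy
  simp only [dist_eq_norm] at hxy hcp hcx hcy
  rw [← sub_sub_sub_cancel_right x y p] at hxy
  rw [← sub_sub_sub_cancel_right c x p] at hcx
  rw [← sub_sub_sub_cancel_right c y p] at hcy
  have hspan := Submodule.span_pair_eq_top_of_finrank_eq_two hdim hx hy (by linarith)
    (sub_left_injective.ne hne)
  rw [sphereArc, dist_eq_norm, show ∀ n : E, p + n - c = n - (c - p) from fun n => by abel]
  exact norm_normalize_lineMap_sub_le_one hx hy hxy hcp hcx hcy (hspan ▸ Submodule.mem_top) ht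

end sphereArc

end NormedSpace

theorem unit_dist_set_is_arc_general {E : Type*} [NormedAddCommGroup E] [NormedSpace ℝ E]
    (hdim : Module.finrank ℝ E = 2)
    (C : Set E) (hcpt : IsCompact C)
    (hC : IsDiamComplete C) (hd : Metric.diam C = 1)
    (p : E) (hp : p ∈ frontier C) :
    {x | x ∈ C ∧ dist p x = 1} ⊆ Metric.sphere p 1 ∩ frontier C ∧
      IsConnected {x | x ∈ C ∧ dist p x = 1} := by
  have hbd := hcpt.isBounded
  have hpC : p ∈ C := hcpt.isClosed.frontier_subset hp
  have hdist {x y : E} (hx : x ∈ C) (hy : y ∈ C) : dist x y ≤ 1 :=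
    hd ▸ Metric.dist_le_diam_of_mem hbd hx hy
  obtain ⟨x₀, hx₀C, hx₀⟩ := hC.exists_dist_eq_diam_of_mem_frontier hcpt hp
  rw [hd] at hx₀
  have harc {y : E} (hy : y ∈ C ∧ dist p y = 1) :
      sphereArc p x₀ y '' Icc 0 1 ⊆ {x | x ∈ C ∧ dist p x = 1} := by
    rintro _ ⟨t, ht, rfl⟩
    have hx₀y := hdist hx₀C hy.1
    refine ⟨hC.mem_of_forall_dist_le hbd fun c hc => ?_, dist_sphereArc_eq_one hx₀ hy.2
      (by linarith) ht⟩
    exact hd ▸ dist_sphereArc_le_one hdim hx₀ hy.2 hx₀y (hdist hc hpC) (hdist hc hx₀C)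
      (hdist hc hy.1) ht
  refine ⟨fun x ⟨hxC, hx⟩ => ⟨?_, ?_⟩, ⟨x₀, hx₀C, hx₀⟩,
    isPreconnected_of_forall x₀ fun y hy => ?_⟩
  · rwa [Metric.mem_sphere, dist_comm]
  · exact ⟨subset_closure hxC,
      notMem_interior_of_dist_eq_diam hbd hpC (dist_pos.1 (hx ▸ one_pos)) (hd ▸ hx)⟩
  · refine ⟨_, harc hy, ⟨0, left_mem_Icc.2 zero_le_one, sphereArc_zero hx₀ y⟩,
      ⟨1, right_mem_Icc.2 zero_le_one, sphereArc_one x₀ hy.2⟩,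
      isPreconnected_Icc.image _ (continuousOn_sphereArc hx₀ hy.2 ?_)⟩
    linarith [hdist hx₀C hy.1]

theorem unit_dist_set_is_arc {E : Type*} [NormedAddCommGroup E] [NormedSpace ℝ E]
    (hdim : Module.finrank ℝ E = 2)
    (C : Set E) (hconv : Convex ℝ C) (hcpt : IsCompact C)
    (hC : IsDiamComplete C) (hd : Metric.diam C = 1)
    (p : E) (hp : p ∈ frontier C) :
    {x | x ∈ C ∧ dist p x = 1} ⊆ Metric.sphere p 1 ∩ frontier C ∧
      IsConnected {x | x ∈ C ∧ dist p x = 1} :=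
  unit_dist_set_is_arc_general hdim C hcpt hC hd p hp
end

section
/- The k-fold chromatic number of the odd cycle C_{2s+1} equals 2k + ⌈k/s⌉; that is, the minimum number of colors needed to assign to each vertex of a (2s+1)-cycle a set of k colors so that adjacent vertices receive disjoint color sets is 2k + ⌈k/s⌉. -/
/-!
A colour class of a k-fold colouring of C_{2s+1} is an independent set, so it has at most s
vertices, and double counting gives (2s+1)k ≤ sn. Conversely, if (2s+1)k ≤ sn, vertex i gets the
k cyclically consecutive colours starting at p_i, where consecutive p_i differ by between k and
n - k and p_{2s+1} = sn, so the arcs wind s times around the n colours. Finally, for s > 0,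
(2s+1)k ≤ sn is equivalent to 2k + ⌈k/s⌉ ≤ n.
-/

open Finset

section LowerBound

theorem Finset.two_mul_card_le_of_disjoint_image {α : Type*} [Fintype α] [DecidableEq α]
    {f : α → α} (hf : f.Injective) {S : Finset α} (h : Disjoint S (S.image f)) :
    2 * #S ≤ Fintype.card α := by
  calc 2 * #S = #(S ∪ S.image f) := by
        rw [card_union_of_disjoint h, card_image_of_injective S hf, two_mul]
    _ ≤ Fintype.card α := card_le_univ _

variable {α : Type*} [DecidableEq α] {s k : ℕ} {c : ZMod (2 * s + 1) → Finset α}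

theorem card_filter_mem_le_of_disjoint_add_one (hc : ∀ v, Disjoint (c v) (c (v + 1))) (a : α) :
    #{v | a ∈ c v} ≤ s := by
  set S : Finset (ZMod (2 * s + 1)) := {v | a ∈ c v}
  have hS : Disjoint S (S.image (· + 1)) := by
    simp only [S, disjoint_left, mem_image, mem_filter, mem_univ, true_and]
    rintro _ ha ⟨v, hv, rfl⟩
    exact disjoint_left.mp (hc v) hv ha
  have := two_mul_card_le_of_disjoint_image (add_left_injective 1) hS
  rw [ZMod.card] at this
  omega

theorem mul_le_of_kfold_coloring {n : ℕ} {c : ZMod (2 * s + 1) → Finset (Fin n)}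
    (hcard : ∀ v, #(c v) = k) (hc : ∀ v, Disjoint (c v) (c (v + 1))) :
    (2 * s + 1) * k ≤ n * s := by
  have := card_mul_le_card_mul (fun v (a : Fin n) => a ∈ c v) (s := univ) (t := univ)
    (m := k) (n := s) (fun v _ => by simp [bipartiteAbove, hcard])
    (fun a _ => card_filter_mem_le_of_disjoint_add_one hc a)
  simpa using this

end LowerBound

section Arcs

variable {n : ℕ} [NeZero n]

theorem Fin.ofNat_eq_ofNat_iff_modEq {a b : ℕ} :
    Fin.ofNat n a = Fin.ofNat n b ↔ a ≡ b [MOD n] := by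
  simp [Fin.ext_iff, Nat.ModEq]

variable (n) in
def arc (p k : ℕ) : Finset (Fin n) :=
  (range k).image fun j => Fin.ofNat n (p + j)

theorem card_arc (p : ℕ) {k : ℕ} (hk : k ≤ n) : #(arc n p k) = k := by
  rw [arc, card_image_of_injOn, card_range]
  intro j hj j' hj' h
  simp only [coe_range, Set.mem_Iio] at hj hj'
  have := Nat.ModEq.add_left_cancel' p (Fin.ofNat_eq_ofNat_iff_modEq.mp h)
  rwa [Nat.ModEq, Nat.mod_eq_of_lt (by omega), Nat.mod_eq_of_lt (by omega)] at this

theorem disjoint_arc {p q k : ℕ} (hpq : p + k ≤ q) (hqp : q + k ≤ p + n) :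
    Disjoint (arc n p k) (arc n q k) := by
  simp only [arc, disjoint_left, mem_image, mem_range, not_exists, not_and]
  rintro _ ⟨j, hj, rfl⟩ j' hj' h
  have := Nat.le_of_dvd (by omega) ((Nat.modEq_iff_dvd' (by omega)).mp
    (Fin.ofNat_eq_ofNat_iff_modEq.mp h.symm))
  omega

theorem arc_congr {p q : ℕ} (h : p ≡ q [MOD n]) (k : ℕ) : arc n p k = arc n q k :=
  image_congr fun j _ => Fin.ofNat_eq_ofNat_iff_modEq.mpr (h.add_right j)

theorem disjoint_arc_val_add_one {N k : ℕ} [NeZero N] {p : ℕ → ℕ}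
    (hstep : ∀ i < N, p i + k ≤ p (i + 1) ∧ p (i + 1) + k ≤ p i + n)
    (hwrap : p N ≡ p 0 [MOD n]) (v : ZMod N) :
    Disjoint (arc n (p v.val) k) (arc n (p (v + 1).val) k) := by
  have hv := ZMod.val_lt v
  have hnext : arc n (p (v + 1).val) k = arc n (p (v.val + 1)) k := by
    rw [ZMod.val_add, ZMod.val_one_eq_one_mod, Nat.add_mod_mod]
    rcases Nat.lt_or_ge (v.val + 1) N with hlt | hge
    · rw [Nat.mod_eq_of_lt hlt]
    · rw [show v.val + 1 = N by omega, Nat.mod_self]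
      exact arc_congr hwrap.symm k
  rw [hnext]
  exact disjoint_arc (hstep _ hv).1 (hstep _ hv).2

end Arcs

theorem two_mul_le_of_mul_le {s k n : ℕ} (h : (2 * s + 1) * k ≤ n * s) : 2 * k ≤ n := by
  rcases s.eq_zero_or_pos with rfl | hs
  · omega
  · exact Nat.le_of_mul_le_mul_right (by nlinarith) hs

theorem exists_kfold_coloring_of_mul_le {s k n : ℕ} [NeZero n] (h : (2 * s + 1) * k ≤ n * s) :
    ∃ c : ZMod (2 * s + 1) → Finset (Fin n),
      (∀ v, #(c v) = k) ∧ ∀ v, Disjoint (c v) (c (v + 1)) := by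
  obtain ⟨m, rfl⟩ := Nat.exists_eq_add_of_le (two_mul_le_of_mul_le h)
  set e := (2 * k + m) * s - (2 * s + 1) * k
  -- each step adds k plus at most m of the total excess e, so p (2 * s + 1) = (2 * s + 1) * k + e
  set p : ℕ → ℕ := fun i => i * k + min (i * m) e
  have hstep : ∀ i, p i + k ≤ p (i + 1) ∧ p (i + 1) + k ≤ p i + (2 * k + m) := by
    intro i
    simp only [p, add_mul, one_mul]
    omega
  have hwrap : p (2 * s + 1) = s * (2 * k + m) := by
    have he : e ≤ (2 * s + 1) * m := by
      rw [tsub_le_iff_right]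
      nlinarith
    simp only [p, min_eq_right he, e]
    rw [Nat.add_sub_cancel' h, mul_comm]
  refine ⟨fun v => arc _ (p v.val) k, fun v => card_arc _ (by omega), ?_⟩
  refine disjoint_arc_val_add_one (fun i _ => hstep i) ?_
  simpa [hwrap, p] using Nat.modEq_zero_iff_dvd.mpr (dvd_mul_left _ s)

theorem two_mul_add_ceilDiv_le_iff {s k n : ℕ} (hs : 0 < s) :
    2 * k + k ⌈/⌉ s ≤ n ↔ (2 * s + 1) * k ≤ n * s := by
  constructor
  · intro hn
    have hk : k ≤ s * (k ⌈/⌉ s) := (ceilDiv_le_iff_le_mul hs).mp le_rfl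
    nlinarith
  · intro h
    obtain ⟨m, rfl⟩ := Nat.exists_eq_add_of_le (two_mul_le_of_mul_le h)
    have : k ⌈/⌉ s ≤ m := (ceilDiv_le_iff_le_mul hs).mpr (by nlinarith)
    omega

/-- The k-fold chromatic number of the odd cycle C_{2s+1} is 2k + ⌈k/s⌉. -/
theorem kfold_chromatic_odd_cycle (s k : ℕ) (hs : 0 < s) (hk : 0 < k) :
    IsLeast {n : ℕ | ∃ c : ZMod (2 * s + 1) → Finset (Fin n),
        (∀ v, (c v).card = k) ∧ ∀ v, Disjoint (c v) (c (v + 1))}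
      (2 * k + (k + s - 1) / s) := by
  rw [← Nat.ceilDiv_eq_add_pred_div]
  constructor
  · have : NeZero (2 * k + k ⌈/⌉ s) := ⟨by omega⟩
    exact exists_kfold_coloring_of_mul_le ((two_mul_add_ceilDiv_le_iff hs).mp le_rfl)
  · rintro n ⟨c, hcard, hc⟩
    exact (two_mul_add_ceilDiv_le_iff hs).mpr (mul_le_of_kfold_coloring hcard hc)
end
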